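/- (Alternative version of the Weighted Lovász Local Lemma.) Let β > 0 and ν > 0 be constants with β = e^{2·log 2/ν}. Let E₁, …, E_M be events in a probability space such that each E_r is mutually independent of the collection {E₁,…,E_M} \ (𝒟_r ∪ {E_r}) for some set 𝒟_r ⊆ {E₁,…,E_M}. Suppose there exist reals w₁, …, w_M ≥ 1 and h₁, …, h_M such that for each 1 ≤ r ≤ M: (a) P(E_r) ≤ h_r; (b) Σ_{E_s ∈ 𝒟_r} β^{w_s} h_s ≤ w_r/ν; and (c) β^{w_r} h_r ≤ 1/2. Then P(⋂_{r=1}^{M} E_rᶜ) > 0, i.e. with positive probability none of the events E₁, …, E_M occur. -/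

import Mathlib

/-!
With `x r = β ^ w r * h r`, hypotheses (a)–(c) imply the asymmetric local lemma condition
`P(E r) ≤ x r * ∏_{s ∈ 𝒟 r} (1 - x s)`: on `[0, 1/2]` the chord of the convex function `4 ^ (-y)`
gives `1 - y ≥ 4 ^ (-y)`, so the product is at least `4 ^ (-∑ x s) ≥ 4 ^ (-w r / ν) = β ^ (-w r)`.

The local lemma itself is proved in multiplicative form,
`P(E r ∩ avoiding E S) ≤ x r * P(avoiding E S)` for `r ∉ S`, by strong induction on `S`: split `S`
into the part inside `𝒟 r`, whose events are peeled off one at a time, and the part outside, which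
is independent of `E r`. Telescoping then gives `P(avoiding E S) ≥ ∏_{s ∈ S} (1 - x s)`.
-/

open MeasureTheory ProbabilityTheory Finset

variable {Ω ι : Type*} {E : ι → Set Ω}

def avoiding (E : ι → Set Ω) (S : Finset ι) : Set Ω := ⋂ s ∈ S, (E s)ᶜ

@[simp] lemma avoiding_empty (E : ι → Set Ω) : avoiding E ∅ = Set.univ := by
  simp [avoiding]

lemma avoiding_insert [DecidableEq ι] (E : ι → Set Ω) (a : ι) (S : Finset ι) :
    avoiding E (insert a S) = avoiding E S \ E a := by
  rw [avoiding, avoiding, set_biInter_insert, Set.sdiff_eq, Set.inter_comm]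

lemma avoiding_anti (E : ι → Set Ω) {S T : Finset ι} (h : S ⊆ T) :
    avoiding E T ⊆ avoiding E S :=
  Set.biInter_subset_biInter_left h

variable [MeasurableSpace Ω] {μ : Measure Ω} {x : ι → ℝ}

lemma measureReal_inter_avoiding_eq_mul {r : ι} {J : Set ι}
    (hindep : Indep (MeasurableSpace.generateFrom {E r})
      (MeasurableSpace.generateFrom (E '' J)) μ)
    {S : Finset ι} (hS : ∀ s ∈ S, s ∈ J) :
    μ.real (E r ∩ avoiding E S) = μ.real (E r) * μ.real (avoiding E S) := by
  have hr : MeasurableSet[MeasurableSpace.generateFrom {E r}] (E r) :=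
    MeasurableSpace.measurableSet_generateFrom rfl
  have hA : MeasurableSet[MeasurableSpace.generateFrom (E '' J)] (avoiding E S) :=
    measurableSet_biInter _ fun s hs =>
      (MeasurableSpace.measurableSet_generateFrom (Set.mem_image_of_mem E (hS s hs))).compl
  simp only [Measure.real, (Indep_iff _ _ _).1 hindep _ _ hr hA, ENNReal.toReal_mul]

lemma one_sub_mul_measureReal_avoiding_le [DecidableEq ι] [IsFiniteMeasure μ] {a : ι}
    {S : Finset ι} (ha : MeasurableSet (E a))
    (hbound : μ.real (E a ∩ avoiding E S) ≤ x a * μ.real (avoiding E S)) :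
    (1 - x a) * μ.real (avoiding E S) ≤ μ.real (avoiding E (insert a S)) := by
  have hsplit := measureReal_sdiff_add_inter (μ := μ) (s := avoiding E S) ha
  rw [Set.inter_comm] at hsplit
  rw [avoiding_insert]
  linarith

lemma prod_one_sub_mul_measureReal_avoiding_le [DecidableEq ι] [IsFiniteMeasure μ]
    (hE : ∀ s, MeasurableSet (E s)) (hx : ∀ s, x s ≤ 1) {S U : Finset ι}
    (hbound : ∀ V ⊂ S, ∀ r ∉ V, μ.real (E r ∩ avoiding E V) ≤ x r * μ.real (avoiding E V))
    (T : Finset ι) (hUT : Disjoint U T) (hS : U ∪ T ⊆ S) :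
    (∏ s ∈ T, (1 - x s)) * μ.real (avoiding E U) ≤ μ.real (avoiding E (U ∪ T)) := by
  induction T using Finset.induction_on with
  | empty => simp
  | @insert a T haT ih =>
    rw [disjoint_insert_right] at hUT
    rw [union_insert] at hS ⊢
    have haUT : a ∉ U ∪ T := by simp [haT, hUT.1]
    have hUTS : U ∪ T ⊂ S :=
      (ssubset_insert haUT).trans_le hS
    calc (∏ s ∈ insert a T, (1 - x s)) * μ.real (avoiding E U)
        = (1 - x a) * ((∏ s ∈ T, (1 - x s)) * μ.real (avoiding E U)) := by
          rw [prod_insert haT, mul_assoc]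
      _ ≤ (1 - x a) * μ.real (avoiding E (U ∪ T)) :=
          mul_le_mul_of_nonneg_left (ih hUT.2 ((subset_insert _ _).trans hS))
            (sub_nonneg.2 (hx a))
      _ ≤ μ.real (avoiding E (insert a (U ∪ T))) :=
          one_sub_mul_measureReal_avoiding_le (hE a) (hbound _ hUTS a haUT)

section LocalLemma

variable [DecidableEq ι] [IsProbabilityMeasure μ] {D : ι → Finset ι}

lemma measureReal_inter_avoiding_le (hE : ∀ s, MeasurableSet (E s))
    (hindep : ∀ r, Indep (MeasurableSpace.generateFrom {E r})
      (MeasurableSpace.generateFrom (E '' {s | s ≠ r ∧ s ∉ D r})) μ)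
    (hx0 : ∀ r, 0 ≤ x r) (hx1 : ∀ r, x r ≤ 1)
    (hP : ∀ r, μ.real (E r) ≤ x r * ∏ s ∈ D r, (1 - x s)) (S : Finset ι) :
    ∀ r ∉ S, μ.real (E r ∩ avoiding E S) ≤ x r * μ.real (avoiding E S) := by
  induction S using Finset.strongInduction with
  | H S ih =>
    intro r hr
    have hfar : ∀ s ∈ S \ D r, s ∈ {s | s ≠ r ∧ s ∉ D r} := fun s hs =>
      ⟨fun hsr => hr (hsr ▸ (mem_sdiff.1 hs).1), (mem_sdiff.1 hs).2⟩
    have hnear : μ.real (E r) ≤ x r * ∏ s ∈ S ∩ D r, (1 - x s) :=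
      (hP r).trans <| mul_le_mul_of_nonneg_left
        (prod_le_prod_of_subset_of_le_one inter_subset_right
          (fun s _ => sub_nonneg.2 (hx1 s)) fun s _ _ => by linarith [hx0 s])
        (hx0 r)
    have htele := prod_one_sub_mul_measureReal_avoiding_le hE hx1 (μ := μ) (S := S) ih
      (S ∩ D r) (disjoint_sdiff_inter S (D r)) (sdiff_union_inter S (D r)).le
    rw [sdiff_union_inter] at htele
    calc μ.real (E r ∩ avoiding E S)
        ≤ μ.real (E r ∩ avoiding E (S \ D r)) :=
          measureReal_mono (Set.inter_subset_inter_right _ (avoiding_anti E sdiff_subset))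
      _ = μ.real (E r) * μ.real (avoiding E (S \ D r)) :=
          measureReal_inter_avoiding_eq_mul (hindep r) hfar
      _ ≤ (x r * ∏ s ∈ S ∩ D r, (1 - x s)) * μ.real (avoiding E (S \ D r)) := by
          gcongr
      _ = x r * ((∏ s ∈ S ∩ D r, (1 - x s)) * μ.real (avoiding E (S \ D r))) := mul_assoc ..
      _ ≤ x r * μ.real (avoiding E S) := mul_le_mul_of_nonneg_left htele (hx0 r)

theorem prod_one_sub_le_measureReal_avoiding (hE : ∀ s, MeasurableSet (E s))
    (hindep : ∀ r, Indep (MeasurableSpace.generateFrom {E r})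
      (MeasurableSpace.generateFrom (E '' {s | s ≠ r ∧ s ∉ D r})) μ)
    (hx0 : ∀ r, 0 ≤ x r) (hx1 : ∀ r, x r ≤ 1)
    (hP : ∀ r, μ.real (E r) ≤ x r * ∏ s ∈ D r, (1 - x s)) (S : Finset ι) :
    ∏ s ∈ S, (1 - x s) ≤ μ.real (avoiding E S) := by
  simpa using prod_one_sub_mul_measureReal_avoiding_le hE hx1 (μ := μ)
    (fun V _ => measureReal_inter_avoiding_le hE hindep hx0 hx1 hP V) S
    (disjoint_empty_left S) (empty_union S).le

theorem lovasz_local_lemma [Fintype ι] (hE : ∀ s, MeasurableSet (E s))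
    (hindep : ∀ r, Indep (MeasurableSpace.generateFrom {E r})
      (MeasurableSpace.generateFrom (E '' {s | s ≠ r ∧ s ∉ D r})) μ)
    (hx0 : ∀ r, 0 ≤ x r) (hx1 : ∀ r, x r < 1)
    (hP : ∀ r, μ.real (E r) ≤ x r * ∏ s ∈ D r, (1 - x s)) :
    0 < μ (⋂ r, (E r)ᶜ) := by
  have hbound := prod_one_sub_le_measureReal_avoiding hE hindep hx0 (fun r => (hx1 r).le) hP univ
  have hpos : 0 < μ.real (avoiding E univ) :=
    (prod_pos fun r _ => sub_pos.2 (hx1 r)).trans_le hbound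
  simpa [avoiding] using (ENNReal.toReal_pos_iff.1 hpos).1

end LocalLemma

lemma exp_neg_two_log_two_mul_le_one_sub {y : ℝ} (h0 : 0 ≤ y) (h2 : y ≤ 1 / 2) :
    Real.exp (-(2 * Real.log 2 * y)) ≤ 1 - y := by
  have hc := convexOn_exp.2 (Set.mem_univ 0) (Set.mem_univ (-Real.log 2))
    (show 0 ≤ 1 - 2 * y by linarith) (show 0 ≤ 2 * y by linarith) (by ring)
  simp only [smul_eq_mul, mul_zero, zero_add, Real.exp_zero, mul_one, Real.exp_neg,
    Real.exp_log two_pos] at hc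
  calc Real.exp (-(2 * Real.log 2 * y)) = Real.exp (2 * y * -Real.log 2) := by ring_nf
    _ ≤ 1 - 2 * y + 2 * y * 2⁻¹ := hc
    _ = 1 - y := by ring

lemma exp_neg_two_log_two_mul_sum_le_prod_one_sub {S : Finset ι} {y : ι → ℝ}
    (h0 : ∀ s ∈ S, 0 ≤ y s) (h2 : ∀ s ∈ S, y s ≤ 1 / 2) :
    Real.exp (-(2 * Real.log 2 * ∑ s ∈ S, y s)) ≤ ∏ s ∈ S, (1 - y s) := by
  rw [mul_sum, ← sum_neg_distrib, Real.exp_sum]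
  exact prod_le_prod (fun s _ => (Real.exp_pos _).le) fun s hs =>
    exp_neg_two_log_two_mul_le_one_sub (h0 s hs) (h2 s hs)

lemma le_rpow_mul_mul_prod_one_sub {β ν w h : ℝ} (hβ : β = Real.exp (2 * Real.log 2 / ν))
    (hh : 0 ≤ h) {S : Finset ι} {y : ι → ℝ} (h0 : ∀ s ∈ S, 0 ≤ y s)
    (h2 : ∀ s ∈ S, y s ≤ 1 / 2) (hsum : ∑ s ∈ S, y s ≤ w / ν) :
    h ≤ β ^ w * h * ∏ s ∈ S, (1 - y s) := by
  have hβw : β ^ w * Real.exp (-(2 * Real.log 2 * (w / ν))) = 1 := by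
    rw [hβ, ← Real.exp_mul, ← Real.exp_add, ← Real.exp_zero]
    ring_nf
  have hβw0 : 0 ≤ β ^ w * h := mul_nonneg (Real.rpow_nonneg (hβ ▸ (Real.exp_pos _).le) w) hh
  calc h = β ^ w * h * Real.exp (-(2 * Real.log 2 * (w / ν))) := by
        rw [mul_right_comm, hβw, one_mul]
    _ ≤ β ^ w * h * Real.exp (-(2 * Real.log 2 * ∑ s ∈ S, y s)) := by
        gcongr
    _ ≤ β ^ w * h * ∏ s ∈ S, (1 - y s) :=
        mul_le_mul_of_nonneg_left (exp_neg_two_log_two_mul_sum_le_prod_one_sub h0 h2) hβw0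

theorem statement11_general (Ω : Type) [MeasurableSpace Ω] (μ : Measure Ω) [IsProbabilityMeasure μ]
    (β ν : ℝ) (hβ : β = Real.exp (2 * Real.log 2 / ν))
    (M : ℕ) (E : Fin M → Set Ω) (hmeas : ∀ r, MeasurableSet (E r))
    (D : Fin M → Finset (Fin M))
    (hindep : ∀ r : Fin M,
      Indep (MeasurableSpace.generateFrom {E r})
        (MeasurableSpace.generateFrom (E '' {s : Fin M | s ≠ r ∧ s ∉ D r})) μ)
    (w h : Fin M → ℝ)
    (ha : ∀ r, (μ (E r)).toReal ≤ h r)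
    (hb : ∀ r, ∑ s ∈ D r, β ^ (w s) * h s ≤ w r / ν)
    (hc : ∀ r, β ^ (w r) * h r ≤ 1 / 2) :
    0 < μ (⋂ r : Fin M, (E r)ᶜ) := by
  have hh0 : ∀ r, 0 ≤ h r := fun r => ENNReal.toReal_nonneg.trans (ha r)
  have hx0 : ∀ r, 0 ≤ β ^ w r * h r := fun r =>
    mul_nonneg (Real.rpow_nonneg (hβ ▸ (Real.exp_pos _).le) _) (hh0 r)
  refine lovasz_local_lemma (D := D) hmeas hindep hx0 (fun r => (hc r).trans_lt (by norm_num))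
    fun r => (ha r).trans ?_
  exact le_rpow_mul_mul_prod_one_sub hβ (hh0 r) (fun s _ => hx0 s) (fun s _ => hc s) (hb r)

/-- Alternative version of the Weighted Lovász Local Lemma. Let `β, ν > 0` with
`β = e^(2·log 2/ν)`. Let `E 1, …, E M` be events in a probability space such that each
`E r` is mutually independent of the collection of events outside `𝒟 r ∪ {E r}`
(formalized as independence of the generated σ-algebras). If there are reals
`w r ≥ 1` and `h r` such that (a) `P(E r) ≤ h r`, (b) `∑_{s ∈ 𝒟 r} β^(w s) h s ≤ w r/ν`
and (c) `β^(w r) h r ≤ 1/2` for every `r`, then with positive probability none of the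
events occur. -/
theorem statement11 (Ω : Type) [MeasurableSpace Ω] (μ : Measure Ω) [IsProbabilityMeasure μ]
    (β ν : ℝ) (hν : 0 < ν) (hβ : β = Real.exp (2 * Real.log 2 / ν))
    (M : ℕ) (E : Fin M → Set Ω) (hmeas : ∀ r, MeasurableSet (E r))
    (D : Fin M → Finset (Fin M))
    (hindep : ∀ r : Fin M,
      Indep (MeasurableSpace.generateFrom {E r})
        (MeasurableSpace.generateFrom (E '' {s : Fin M | s ≠ r ∧ s ∉ D r})) μ)
    (w h : Fin M → ℝ) (hw : ∀ r, 1 ≤ w r)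
    (ha : ∀ r, (μ (E r)).toReal ≤ h r)
    (hb : ∀ r, ∑ s ∈ D r, β ^ (w s) * h s ≤ w r / ν)
    (hc : ∀ r, β ^ (w r) * h r ≤ 1 / 2) :
    0 < μ (⋂ r : Fin M, (E r)ᶜ) :=
  statement11_general Ω μ β ν hβ M E hmeas D hindep w h ha hb hc
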